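/- Suppose f : ℝ^{n×p} → ℝ is globally Lipschitz continuous with constant M̂₁ with respect to the Frobenius norm, i.e. |f(A) − f(B)| ≤ M̂₁·‖A − B‖_F for all A, B. Then for every β > 0, the ExPen function h is bounded below on ℝ^{n×p}. -/

import Mathlib

open Matrix

attribute [local instance] Matrix.frobeniusNormedAddCommGroup Matrix.frobeniusNormedSpace

namespace ExPen

noncomputable def finner {n p : ℕ} (A B : Matrix (Fin n) (Fin p) ℝ) : ℝ := (Aᵀ * B).trace

noncomputable def Phi {p : ℕ} (M : Matrix (Fin p) (Fin p) ℝ) : Matrix (Fin p) (Fin p) ℝ :=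
  (1 / 2 : ℝ) • (M + Mᵀ)

noncomputable def Amap {n p : ℕ} (X : Matrix (Fin n) (Fin p) ℝ) : Matrix (Fin p) (Fin p) ℝ :=
  (3 / 2 : ℝ) • (1 : Matrix (Fin p) (Fin p) ℝ) - (1 / 2 : ℝ) • (Xᵀ * X)

noncomputable def g {n p : ℕ} (f : Matrix (Fin n) (Fin p) ℝ → ℝ)
    (X : Matrix (Fin n) (Fin p) ℝ) : ℝ := f (X * Amap X)

noncomputable def hpen {n p : ℕ} (f : Matrix (Fin n) (Fin p) ℝ → ℝ) (β : ℝ)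
    (X : Matrix (Fin n) (Fin p) ℝ) : ℝ := g f X + β / 4 * ‖Xᵀ * X - 1‖ ^ 2

noncomputable def dualCLM {n p : ℕ} (G : Matrix (Fin n) (Fin p) ℝ) :
    Matrix (Fin n) (Fin p) ℝ →L[ℝ] ℝ :=
  LinearMap.toContinuousLinearMap
    { toFun := fun D => (Gᵀ * D).trace
      map_add' := by intro D E; simp [Matrix.mul_add]
      map_smul' := by intro c D; simp [Matrix.mul_smul] }

def HasGradAt {n p : ℕ} (φ : Matrix (Fin n) (Fin p) ℝ → ℝ)
    (X G : Matrix (Fin n) (Fin p) ℝ) : Prop :=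
  HasFDerivAt φ (dualCLM G) X

noncomputable def specNorm {n p : ℕ} (X : Matrix (Fin n) (Fin p) ℝ) : ℝ :=
  ‖LinearMap.toContinuousLinearMap
    (Matrix.toEuclideanLin X : EuclideanSpace ℝ (Fin p) →ₗ[ℝ] EuclideanSpace ℝ (Fin n))‖

lemma posSemidef_tmul {n p : ℕ} (X : Matrix (Fin n) (Fin p) ℝ) : (Xᵀ * X).PosSemidef := by
  simpa [Matrix.conjTranspose_eq_transpose_of_trivial] using
    Matrix.posSemidef_conjTranspose_mul_self X

noncomputable def PosSemidef.sqrt {n : ℕ} {A : Matrix (Fin n) (Fin n) ℝ} (hA : A.PosSemidef) :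
    Matrix (Fin n) (Fin n) ℝ :=
  hA.1.eigenvectorUnitary.1 * diagonal ((↑) ∘ (√·) ∘ hA.1.eigenvalues) *
    (star hA.1.eigenvectorUnitary : Matrix (Fin n) (Fin n) ℝ)

noncomputable def Pst {n p : ℕ} (X : Matrix (Fin n) (Fin p) ℝ) : Matrix (Fin n) (Fin p) ℝ :=
  X * (PosSemidef.sqrt (posSemidef_tmul X))⁻¹


/-!
Write `t = ‖XᵀX - I‖`. Since `‖X‖² = tr(XᵀX) ≤ p + √p t` and `A(X) = I - (XᵀX - I)/2`, the
Lipschitz bound `f(Y) ≥ f(0) - M₁‖Y‖` at `Y = X A(X)` loses at most a multiple of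
`√(p + √p t) (√p + t/2) = O(t^(3/2))`, which the penalty `β t²/4` dominates. By AM-GM the loss is
at most `β t²/16` plus terms linear in `t`, leaving a quadratic in `t` with positive leading
coefficient.
-/

section Frobenius

variable {m k : Type*} [Fintype m] [Fintype k]

lemma frobenius_norm_sq_eq_sum_sq (A : Matrix m k ℝ) : ‖A‖ ^ 2 = ∑ i, ∑ j, A i j ^ 2 := by
  rw [frobenius_norm_def, ← Real.rpow_natCast _ 2, ← Real.rpow_mul (by positivity)]
  norm_num

lemma frobenius_norm_sq_eq_trace (X : Matrix m k ℝ) : ‖X‖ ^ 2 = (Xᵀ * X).trace := by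
  rw [frobenius_norm_sq_eq_sum_sq, Finset.sum_comm]
  simp [Matrix.trace, Matrix.mul_apply, pow_two]

lemma frobenius_norm_one_real [DecidableEq m] :
    ‖(1 : Matrix m m ℝ)‖ = √(Fintype.card m) := by
  simpa using congrArg NNReal.toReal (frobenius_nnnorm_one (n := m) (α := ℝ))

lemma trace_le_sqrt_card_mul_frobenius_norm (M : Matrix m m ℝ) :
    M.trace ≤ √(Fintype.card m) * ‖M‖ :=
  calc M.trace = ∑ i, 1 * M i i := by simp [Matrix.trace]
    _ ≤ √(∑ _i : m, 1 ^ 2) * √(∑ i, M i i ^ 2) := Real.sum_mul_le_sqrt_mul_sqrt _ _ _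
    _ ≤ √(Fintype.card m) * ‖M‖ := by
      rw [← Real.sqrt_sq (norm_nonneg M), frobenius_norm_sq_eq_sum_sq]
      gcongr with i
      · simp
      · exact Finset.single_le_sum (f := fun j => M i j ^ 2) (fun _ _ => sq_nonneg _)
          (Finset.mem_univ i)

lemma frobenius_norm_sq_le_card_add [DecidableEq k] (X : Matrix m k ℝ) :
    ‖X‖ ^ 2 ≤ Fintype.card k + √(Fintype.card k) * ‖Xᵀ * X - 1‖ := by
  have h := trace_le_sqrt_card_mul_frobenius_norm (Xᵀ * X - 1)
  rw [trace_sub, trace_one] at h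
  rw [frobenius_norm_sq_eq_trace]
  linarith

end Frobenius

lemma exists_forall_le_quadratic {a : ℝ} (ha : 0 < a) (b : ℝ) :
    ∃ c : ℝ, ∀ t : ℝ, c ≤ a * t ^ 2 - b * t := by
  refine ⟨-b ^ 2 / (4 * a), fun t => ?_⟩
  rw [div_le_iff₀ (by positivity)]
  nlinarith [sq_nonneg (2 * a * t - b)]

variable {n p : ℕ}

lemma Amap_eq_one_sub (X : Matrix (Fin n) (Fin p) ℝ) :
    Amap X = 1 - (1 / 2 : ℝ) • (Xᵀ * X - 1) := by
  unfold Amap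
  module

lemma norm_Amap_le (X : Matrix (Fin n) (Fin p) ℝ) :
    ‖Amap X‖ ≤ √p + ‖Xᵀ * X - 1‖ / 2 := by
  rw [Amap_eq_one_sub]
  calc _ ≤ ‖(1 : Matrix (Fin p) (Fin p) ℝ)‖ + ‖(1 / 2 : ℝ) • (Xᵀ * X - 1)‖ := norm_sub_le _ _
    _ = √p + ‖Xᵀ * X - 1‖ / 2 := by
      rw [frobenius_norm_one_real, norm_smul, Fintype.card_fin]
      norm_num
      ring

lemma mul_norm_mul_Amap_le (X : Matrix (Fin n) (Fin p) ℝ) {L β : ℝ} (hL : 0 ≤ L) (hβ : 0 < β) :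
    L * ‖X * Amap X‖ ≤ β / 16 * ‖Xᵀ * X - 1‖ ^ 2
      + (L ^ 2 * √p / β + β * √p / 4) * ‖Xᵀ * X - 1‖ + (L ^ 2 * p / β + β * p / 4) := by
  set t := ‖Xᵀ * X - 1‖
  set a := √p + t / 2
  have hX : ‖X‖ ^ 2 ≤ p + √p * t := by simpa using frobenius_norm_sq_le_card_add X
  have hp : √p ^ 2 = p := Real.sq_sqrt (Nat.cast_nonneg p)
  have amgm : L * ‖X‖ * a ≤ L ^ 2 * ‖X‖ ^ 2 / β + β * a ^ 2 / 4 := by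
    rw [div_add_div _ _ hβ.ne' four_ne_zero, le_div_iff₀ (by positivity)]
    nlinarith [sq_nonneg (β * a - 2 * L * ‖X‖)]
  calc L * ‖X * Amap X‖ ≤ L * (‖X‖ * a) :=
        mul_le_mul_of_nonneg_left ((frobenius_norm_mul _ _).trans
          (mul_le_mul_of_nonneg_left (norm_Amap_le X) (norm_nonneg X))) hL
    _ ≤ L ^ 2 * (p + √p * t) / β + β * a ^ 2 / 4 := by
      rw [← mul_assoc]
      refine amgm.trans ?_
      gcongr
    _ = _ := by
      simp only [a]
      field_simp
      linear_combination 64 * β ^ 2 * hp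

theorem statement_5 {n p : ℕ} (f : Matrix (Fin n) (Fin p) ℝ → ℝ) (β M₁ : ℝ)
    (hLip : ∀ A B : Matrix (Fin n) (Fin p) ℝ, |f A - f B| ≤ M₁ * ‖A - B‖)
    (hβ : 0 < β) :
    ∃ c : ℝ, ∀ X : Matrix (Fin n) (Fin p) ℝ, c ≤ hpen f β X := by
  obtain ⟨c, hc⟩ := exists_forall_le_quadratic (a := 3 * β / 16) (by positivity)
    (|M₁| ^ 2 * √p / β + β * √p / 4)
  refine ⟨f 0 - (|M₁| ^ 2 * p / β + β * p / 4) + c, fun X => ?_⟩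
  have hf : f 0 - |M₁| * ‖X * Amap X‖ ≤ f (X * Amap X) := by
    have h := hLip 0 (X * Amap X)
    rw [zero_sub, norm_neg] at h
    have hM₁ := mul_le_mul_of_nonneg_right (le_abs_self M₁) (norm_nonneg (X * Amap X))
    linarith [le_of_abs_le h]
  have hg := mul_norm_mul_Amap_le X (abs_nonneg M₁) hβ
  have hq := hc ‖Xᵀ * X - 1‖
  unfold hpen g
  linarith

end ExPen
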